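/- arXiv:1109.6239 — 3 statements merged into one kernel-verified Lean document; each statement's English description precedes it below -/
import Mathlib

section
/- Factorization implies marginal independence by induction on zeros: let X_V be a vector of binary (0/1-valued) random variables with strictly positive joint distribution, and A, B disjoint nonempty subsets of V. If P(X_{A'} = 1, X_{B'} = 1) = P(X_{A'} = 1)·P(X_{B'} = 1) for all A' ⊆ A and B' ⊆ B, then X_A and X_B are independent, i.e., P(X_{A∪B} = i_{A∪B}) = P(X_A = i_A)·P(X_B = i_B) for every cell i_{A∪B} ∈ {0,1}^{A∪B}. -/
open Finset

/-- Probability that the subvector `X_A` shows the cell pattern `i ⊆ A`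
(coordinates in `i` equal to 1, coordinates in `A \ i` equal to 0), for a
binary random vector whose joint distribution on `{0,1}^V` is encoded by the
vector `π` indexed by subsets of `V`. -/
def cellProb {V : Type*} [Fintype V] [DecidableEq V]
    (π : Finset V → ℝ) (A i : Finset V) : ℝ :=
  ∑ H ∈ univ.powerset.filter (fun H => H ∩ A = i), π H

/-- The mean parameter: `μ_D = P(X_D = 1_D)`. -/
def mu {V : Type*} [Fintype V] [DecidableEq V]
    (π : Finset V → ℝ) (D : Finset V) : ℝ :=
  ∑ H ∈ univ.powerset.filter (fun H => D ⊆ H), π H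

/-- The log-mean linear parameter `γ_D = Σ_{E ⊆ D} (-1)^{|D\E|} log μ_E`. -/
noncomputable def gam {V : Type*} [Fintype V] [DecidableEq V]
    (π : Finset V → ℝ) (D : Finset V) : ℝ :=
  ∑ E ∈ D.powerset, (-1 : ℝ) ^ (D \ E).card * Real.log (mu π E)

/-
Inclusion–exclusion expresses every cell probability through mean parameters:
`P(X_A = i_A) = ∑_{S ⊆ A \ i} (-1)^{|S|} μ_{i ∪ S}`. For a cell of `A ∪ B` the index set
`(A ∪ B) \ i` splits into a part in `A` and a part in `B`, so the double sum factors term by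
term once `μ_{A' ∪ B'} = μ_{A'} μ_{B'}`.
-/

section Powerset

variable {α : Type*} [DecidableEq α]

theorem sum_powerset_union_of_disjoint {M : Type*} [AddCommMonoid M] {a b : Finset α}
    (h : Disjoint a b) (f : Finset α → M) :
    ∑ S ∈ (a ∪ b).powerset, f S = ∑ s ∈ a.powerset, ∑ t ∈ b.powerset, f (s ∪ t) := by
  rw [← sum_product']
  refine sum_nbij' (fun S => (S ∩ a, S ∩ b)) (fun p => p.1 ∪ p.2) ?_ ?_ ?_ ?_ ?_
  · intro S _
    simp only [mem_product, mem_powerset]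
    exact ⟨inter_subset_right, inter_subset_right⟩
  · rintro ⟨s, t⟩ hst
    simp only [mem_product, mem_powerset] at hst ⊢
    exact union_subset_union hst.1 hst.2
  · intro S hS
    rw [mem_powerset] at hS
    rw [← inter_union_distrib_left, inter_eq_left.2 hS]
  · rintro ⟨s, t⟩ hst
    simp only [mem_product, mem_powerset] at hst
    simp only [union_inter_distrib_right, inter_eq_left.2 hst.1, inter_eq_left.2 hst.2,
      disjoint_iff_inter_eq_empty.1 (h.mono_left hst.1),
      disjoint_iff_inter_eq_empty.1 (h.symm.mono_left hst.2), union_empty, empty_union]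
  · intro S hS
    rw [mem_powerset] at hS
    rw [← inter_union_distrib_left, inter_eq_left.2 hS]

theorem sum_neg_one_pow_card_filter_union_subset {R : Type*} [Ring R] {A i : Finset α}
    (hi : i ⊆ A) (H : Finset α) :
    ∑ S ∈ (A \ i).powerset with i ∪ S ⊆ H, (-1 : R) ^ #S = if H ∩ A = i then 1 else 0 := by
  by_cases hiH : i ⊆ H
  · have hfilter : {S ∈ (A \ i).powerset | i ∪ S ⊆ H} = ((H ∩ A) \ i).powerset := by
      ext S
      simp only [mem_filter, mem_powerset, union_subset_iff, subset_sdiff, subset_inter_iff]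
      tauto
    have hcast := congrArg (Int.cast : ℤ → R) (sum_powerset_neg_one_pow_card (x := (H ∩ A) \ i))
    push_cast at hcast
    rw [hfilter, hcast]
    exact if_congr (sdiff_eq_empty_iff_subset.trans
      ⟨fun h => h.antisymm (subset_inter hiH hi), fun h => h.subset⟩) rfl rfl
  · rw [sum_eq_zero fun S hS => absurd (mem_filter.1 hS).2 fun h => hiH (union_subset_iff.1 h).1,
      if_neg fun (h : H ∩ A = i) => hiH (h ▸ inter_subset_left)]

end Powerset

theorem cellProb_eq_sum_mu {V : Type*} [Fintype V] [DecidableEq V] (π : Finset V → ℝ)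
    {A i : Finset V} (hi : i ⊆ A) :
    cellProb π A i = ∑ S ∈ (A \ i).powerset, (-1 : ℝ) ^ #S * mu π (i ∪ S) := by
  calc cellProb π A i
      = ∑ H ∈ univ.powerset, (∑ S ∈ (A \ i).powerset with i ∪ S ⊆ H, (-1 : ℝ) ^ #S) * π H := by
        rw [cellProb, sum_filter]
        exact sum_congr rfl fun H _ => by rw [sum_neg_one_pow_card_filter_union_subset hi, boole_mul]
    _ = ∑ S ∈ (A \ i).powerset, (-1 : ℝ) ^ #S * mu π (i ∪ S) := by
        simp only [mu, sum_filter, sum_mul, mul_sum, ite_mul, mul_ite, zero_mul, mul_zero]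
        exact sum_comm

theorem factorization_implies_independence_general {V : Type*} [Fintype V] [DecidableEq V]
    (π : Finset V → ℝ)
    (A B : Finset V) (hdisj : Disjoint A B)
    (hfact : ∀ A' ⊆ A, ∀ B' ⊆ B, mu π (A' ∪ B') = mu π A' * mu π B') :
    ∀ i ⊆ A ∪ B,
      cellProb π (A ∪ B) i = cellProb π A (i ∩ A) * cellProb π B (i ∩ B) := by
  intro i hi
  have hsplit : (A ∪ B) \ i = A \ (i ∩ A) ∪ B \ (i ∩ B) := by
    ext x
    simp only [mem_sdiff, mem_union, mem_inter]
    tauto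
  have hdisj' : Disjoint (A \ (i ∩ A)) (B \ (i ∩ B)) :=
    hdisj.mono sdiff_subset sdiff_subset
  rw [cellProb_eq_sum_mu π hi, cellProb_eq_sum_mu π inter_subset_right,
    cellProb_eq_sum_mu π inter_subset_right, hsplit, sum_powerset_union_of_disjoint hdisj',
    sum_mul_sum]
  refine sum_congr rfl fun s hs => sum_congr rfl fun t ht => ?_
  rw [mem_powerset] at hs ht
  have hunion : i ∪ (s ∪ t) = (i ∩ A ∪ s) ∪ (i ∩ B ∪ t) := by
    rw [union_union_union_comm, ← inter_union_distrib_left, inter_eq_left.2 hi]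
  rw [hunion, hfact _ (union_subset inter_subset_right (hs.trans sdiff_subset))
    _ (union_subset inter_subset_right (ht.trans sdiff_subset)),
    card_union_of_disjoint (hdisj'.mono hs ht), pow_add]
  ring

theorem factorization_implies_independence {V : Type*} [Fintype V] [DecidableEq V]
    (π : Finset V → ℝ) (hpos : ∀ H : Finset V, 0 < π H)
    (hsum : ∑ H ∈ (univ : Finset V).powerset, π H = 1)
    (A B : Finset V) (hA : A.Nonempty) (hB : B.Nonempty) (hdisj : Disjoint A B)
    (hfact : ∀ A' ⊆ A, ∀ B' ⊆ B, mu π (A' ∪ B') = mu π A' * mu π B') :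
    ∀ i ⊆ A ∪ B,
      cellProb π (A ∪ B) i = cellProb π A (i ∩ A) * cellProb π B (i ∩ B) :=
  factorization_implies_independence_general π A B hdisj hfact
end

section
/- In direction (iii)⇒(ii) of the previous equivalence, the key inductive step holds: if μ_{A'∪B'} = μ_{A'}·μ_{B'} for all A' ⊆ A, B' ⊆ B with A'∪B' ≠ A∪B, then γ_{A∪B} = log μ_{A∪B} − log μ_A − log μ_B. -/
/-!
`γ` is the Möbius transform of `log μ` on the Boolean lattice. By the factorisation hypothesis,
`log μ E` agrees with `log μ (E ∩ A) + log μ (E ∩ B)` on every proper subset `E` of `A ∪ B`, so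
the two transforms at `A ∪ B` differ only through their top terms. The transform of the second
function vanishes: each of its two terms is invariant under adding a point outside `A`
(resp. `B`), and such points exist in `A ∪ B` because the other block is nonempty.
-/

open Finset

namespace Finset

variable {α R : Type*} [DecidableEq α] [CommRing R]

def powersetMobius (f : Finset α → R) (D : Finset α) : R :=
  ∑ E ∈ D.powerset, (-1) ^ (D \ E).card * f E

theorem powersetMobius_eq_add_sum_ssubsets (f : Finset α → R) (D : Finset α) :
    powersetMobius f D = f D + ∑ E ∈ D.ssubsets, (-1) ^ (D \ E).card * f E := by
  rw [powersetMobius, ssubsets, ← add_sum_erase _ _ (mem_powerset_self D), sdiff_self,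
    bot_eq_empty, card_empty, pow_zero, one_mul]

theorem powersetMobius_sub_eq_of_eqOn_ssubsets {f g : Finset α → R} {D : Finset α}
    (h : ∀ E ⊂ D, f E = g E) : powersetMobius f D - f D = powersetMobius g D - g D := by
  simp only [powersetMobius_eq_add_sum_ssubsets, add_sub_cancel_left]
  exact sum_congr rfl fun E hE => by rw [h E (mem_ssubsets.1 hE)]

theorem powersetMobius_add (f g : Finset α → R) (D : Finset α) :
    powersetMobius (fun E => f E + g E) D = powersetMobius f D + powersetMobius g D := by
  simp only [powersetMobius, mul_add, sum_add_distrib]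

/-- The summands for `E` and `insert x E` cancel. -/
theorem powersetMobius_eq_zero_of_insert_eq {f : Finset α → R} {D : Finset α} {x : α}
    (hx : x ∈ D) (hf : ∀ E, f (insert x E) = f E) : powersetMobius f D = 0 := by
  rw [powersetMobius, ← insert_erase hx, sum_powerset_insert (notMem_erase x D),
    ← sum_add_distrib]
  refine sum_eq_zero fun E hE => ?_
  have hxE : x ∉ E := fun h => notMem_erase x D (mem_powerset.1 hE h)
  have hxD : x ∉ D.erase x \ E := fun h => notMem_erase x D (mem_sdiff.1 h).1
  rw [insert_sdiff_of_notMem _ hxE, card_insert_of_notMem hxD, insert_sdiff_insert,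
    sdiff_insert_of_notMem (notMem_erase x D), hf, pow_succ]
  ring

theorem powersetMobius_comp_inter_eq_zero (f : Finset α → R) {D S : Finset α}
    (h : (D \ S).Nonempty) : powersetMobius (fun E => f (E ∩ S)) D = 0 := by
  obtain ⟨x, hx⟩ := h
  refine powersetMobius_eq_zero_of_insert_eq (mem_sdiff.1 hx).1 fun E => ?_
  rw [insert_inter_of_notMem (mem_sdiff.1 hx).2]

end Finset

theorem gamma_inductive_step_general {V : Type*} [DecidableEq V]
    (μ : Finset V → ℝ) (hpos : ∀ D : Finset V, 0 < μ D)
    (γ : Finset V → ℝ)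
    (hγ : ∀ D : Finset V, γ D = ∑ E ∈ D.powerset, (-1 : ℝ) ^ (D \ E).card * Real.log (μ E))
    (A B : Finset V) (hA : A.Nonempty) (hB : B.Nonempty) (hdisj : Disjoint A B)
    (hfact : ∀ A' ⊆ A, ∀ B' ⊆ B, A' ∪ B' ≠ A ∪ B → μ (A' ∪ B') = μ A' * μ B') :
    γ (A ∪ B) = Real.log (μ (A ∪ B)) - Real.log (μ A) - Real.log (μ B) := by
  have hsplit : ∀ E ⊂ A ∪ B, Real.log (μ E) = Real.log (μ (E ∩ A)) + Real.log (μ (E ∩ B)) := by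
    intro E hE
    have hE_eq : E ∩ A ∪ E ∩ B = E := by rw [← inter_union_distrib_left, inter_eq_left.2 hE.1]
    rw [← Real.log_mul (hpos _).ne' (hpos _).ne', ← hfact _ inter_subset_right _ inter_subset_right
      (by rw [hE_eq]; exact hE.ne), hE_eq]
  have hsplit_vanishes : powersetMobius (fun E => Real.log (μ (E ∩ A)) + Real.log (μ (E ∩ B)))
      (A ∪ B) = 0 := by
    rw [powersetMobius_add, powersetMobius_comp_inter_eq_zero (fun E => Real.log (μ E)),
      powersetMobius_comp_inter_eq_zero (fun E => Real.log (μ E)), add_zero]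
    · rwa [union_sdiff_right, sdiff_eq_self_of_disjoint hdisj]
    · rwa [union_sdiff_left, sdiff_eq_self_of_disjoint hdisj.symm]
  have htop := powersetMobius_sub_eq_of_eqOn_ssubsets hsplit
  rw [hsplit_vanishes, union_inter_cancel_left, union_inter_cancel_right] at htop
  rw [hγ]
  change powersetMobius (fun E => Real.log (μ E)) (A ∪ B) = _
  linarith

theorem gamma_inductive_step {V : Type*} [Fintype V] [DecidableEq V]
    (μ : Finset V → ℝ) (hpos : ∀ D : Finset V, 0 < μ D) (hempty : μ ∅ = 1)
    (γ : Finset V → ℝ)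
    (hγ : ∀ D : Finset V, γ D = ∑ E ∈ D.powerset, (-1 : ℝ) ^ (D \ E).card * Real.log (μ E))
    (A B : Finset V) (hA : A.Nonempty) (hB : B.Nonempty) (hdisj : Disjoint A B)
    (hfact : ∀ A' ⊆ A, ∀ B' ⊆ B, A' ∪ B' ≠ A ∪ B → μ (A' ∪ B') = μ A' * μ B') :
    γ (A ∪ B) = Real.log (μ (A ∪ B)) - Real.log (μ A) - Real.log (μ B) :=
  gamma_inductive_step_general μ hpos γ hγ A B hA hB hdisj hfact
end

section
/- Corollary (mutual independence): for pairwise disjoint nonempty subsets A_1, …, A_r (r ≥ 2) of V, let 𝒟 be the collection of subsets D of A_1 ∪ ⋯ ∪ A_r such that D ⊄ A_i for every i. Then X_{A_1}, …, X_{A_r} are mutually independent if and only if γ_D = 0 for every D ∈ 𝒟. -/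
open Finset Function

section SubsetLattice

variable {α R : Type*} [DecidableEq α] [Ring R]

def moebiusTransform (g : Finset α → R) (D : Finset α) : R :=
  ∑ E ∈ D.powerset, (-1) ^ (D \ E).card * g E

theorem moebiusTransform_empty (g : Finset α → R) : moebiusTransform g ∅ = g ∅ := by
  simp [moebiusTransform]

theorem sum_Icc_neg_one_pow_card_sdiff (s t : Finset α) :
    ∑ u ∈ Icc s t, (-1 : R) ^ (u \ s).card = if s = t then 1 else 0 := by
  by_cases hst : s ⊆ t
  · have hcancel : ∀ v ∈ (t \ s).powerset, (s ∪ v) \ s = v := fun v hv =>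
      union_sdiff_cancel_left (disjoint_of_subset_right (mem_powerset.1 hv) disjoint_sdiff)
    have hinj : Set.InjOn (s ∪ ·) (t \ s).powerset := fun v hv w hw hvw => by
      rw [← hcancel v hv, ← hcancel w hw]
      exact congrArg (· \ s) hvw
    have hsign := congrArg (Int.cast : ℤ → R) (sum_powerset_neg_one_pow_card (x := t \ s))
    push_cast at hsign
    rw [Icc_eq_image_powerset hst, sum_image hinj,
      sum_congr rfl fun v hv => by rw [hcancel v hv], hsign]
    exact if_congr (by rw [sdiff_eq_empty_iff_subset, Subset.antisymm_iff, and_iff_right hst])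
      rfl rfl
  · rw [Icc_eq_empty (by simpa using hst), sum_empty, if_neg (fun h => hst h.le)]

theorem sum_powerset_moebiusTransform (g : Finset α → R) (D : Finset α) :
    ∑ E ∈ D.powerset, moebiusTransform g E = g D := by
  simp only [moebiusTransform]
  rw [sum_comm' (t' := D.powerset) (s' := fun F => Icc F D) (fun E F => by
    simp only [mem_powerset, mem_Icc]
    exact ⟨fun h => ⟨⟨h.2, h.1⟩, h.2.trans h.1⟩, fun h => ⟨h.1.2, h.1.1⟩⟩)]
  simp only [← sum_mul, sum_Icc_neg_one_pow_card_sdiff, ite_mul, one_mul, zero_mul, sum_ite_eq',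
    mem_powerset, subset_refl, if_true]

theorem eq_of_forall_sum_Icc_eq {M : Type*} [AddCancelCommMonoid M] {f g : Finset α → M}
    {U : Finset α} (h : ∀ D ⊆ U, ∑ E ∈ Icc D U, f E = ∑ E ∈ Icc D U, g E) :
    ∀ D ⊆ U, f D = g D := by
  intro D hD
  refine strongDownwardInduction (p := fun D => D ⊆ U → f D = g D) (n := U.card)
    (fun D ih _ hD => ?_) D (card_le_card hD) hD
  have hIoc : ∑ E ∈ Ioc D U, f E = ∑ E ∈ Ioc D U, g E := sum_congr rfl fun E hE =>
    ih (card_le_card (mem_Ioc.1 hE).2) (mem_Ioc.1 hE).1 (mem_Ioc.1 hE).2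
  have hD' := h D hD
  rw [Icc_eq_cons_Ioc hD, sum_cons, sum_cons, hIoc] at hD'
  exact add_right_cancel hD'

theorem moebiusTransform_eq_zero_of_insert {g : Finset α → R} {D : Finset α} {x : α}
    (hx : x ∈ D) (hg : ∀ E, g (insert x E) = g E) : moebiusTransform g D = 0 := by
  rw [moebiusTransform, ← insert_erase hx, sum_powerset_insert (notMem_erase x D),
    ← sum_add_distrib]
  refine sum_eq_zero fun E hE => ?_
  have hxE : x ∉ E := fun h => notMem_erase x D (mem_powerset.1 hE h)
  rw [hg, insert_sdiff_of_notMem _ hxE, insert_sdiff_insert,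
    sdiff_insert_of_notMem (notMem_erase x D),
    card_insert_of_notMem fun h => notMem_erase x D (mem_sdiff.1 h).1, pow_succ]
  noncomm_ring

variable {ι : Type*} [Fintype ι] {A : ι → Finset α}

theorem moebiusTransform_eq_sum_ite_subset (hA : Pairwise (Disjoint on A)) {g : Finset α → R}
    (hg : g ∅ = 0) {E : Finset α}
    (hcross : (∀ j, ¬ E ⊆ A j) → moebiusTransform g E = 0) :
    moebiusTransform g E = ∑ j, if E ⊆ A j then moebiusTransform g E else 0 := by
  obtain ⟨j, hj⟩ | hE := em (∃ j, E ⊆ A j)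
  swap
  · simp [not_exists.1 hE, hcross (not_exists.1 hE)]
  obtain rfl | hne := E.eq_empty_or_nonempty
  · simp [moebiusTransform_empty, hg]
  rw [sum_eq_single j (fun k _ hkj => if_neg fun hk => ?_) (by simp), if_pos hj]
  obtain ⟨x, hx⟩ := hne
  exact disjoint_left.1 (hA hkj) (hk hx) (hj hx)

theorem forall_moebiusTransform_eq_zero_iff (hA : Pairwise (Disjoint on A))
    {g : Finset α → R} (hg : g ∅ = 0) :
    (∀ D ⊆ univ.biUnion A, g D = ∑ j, g (D ∩ A j)) ↔
      ∀ D ⊆ univ.biUnion A, (∀ j, ¬ D ⊆ A j) → moebiusTransform g D = 0 := by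
  constructor
  · intro hadd D hD hcross
    calc moebiusTransform g D
        = ∑ j, moebiusTransform (fun E => g (E ∩ A j)) D := by
          simp only [moebiusTransform]
          rw [sum_comm]
          exact sum_congr rfl fun E hE => by rw [hadd E ((mem_powerset.1 hE).trans hD), mul_sum]
      _ = 0 := sum_eq_zero fun j _ => by
          obtain ⟨x, hxD, hxA⟩ := not_subset.1 (hcross j)
          exact moebiusTransform_eq_zero_of_insert hxD fun E => by rw [insert_inter_of_notMem hxA]
  · intro hzero D hD
    rw [← sum_powerset_moebiusTransform g D]
    calc ∑ E ∈ D.powerset, moebiusTransform g E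
        = ∑ E ∈ D.powerset, ∑ j, if E ⊆ A j then moebiusTransform g E else 0 :=
          sum_congr rfl fun E hE => moebiusTransform_eq_sum_ite_subset hA hg
            (hzero E ((mem_powerset.1 hE).trans hD))
      _ = ∑ j, ∑ E ∈ (D ∩ A j).powerset, moebiusTransform g E := by
          rw [sum_comm]
          refine sum_congr rfl fun j _ => ?_
          rw [← sum_filter]
          congr 1
          ext E
          simp only [mem_filter, mem_powerset, subset_inter_iff]
      _ = ∑ j, g (D ∩ A j) := by simp only [sum_powerset_moebiusTransform]

end SubsetLattice

section BlockProducts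

variable {α ι : Type*} [DecidableEq α] [Fintype ι] {A : ι → Finset α}

theorem biUnion_inter_eq_of_pairwise_disjoint (hA : Pairwise (Disjoint on A))
    {p : ι → Finset α} (hp : ∀ j, p j ⊆ A j) (j : ι) : univ.biUnion p ∩ A j = p j := by
  ext x
  simp only [mem_inter, mem_biUnion, mem_univ, true_and]
  refine ⟨fun ⟨⟨k, hk⟩, hx⟩ => ?_, fun hx => ⟨⟨j, hx⟩, hp j hx⟩⟩
  obtain rfl | hkj := eq_or_ne k j
  · exact hk
  · exact absurd hx (disjoint_left.1 (hA hkj) (hp k hk))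

theorem biUnion_inter_eq_self_of_subset {s : Finset α} (hs : s ⊆ univ.biUnion A) :
    univ.biUnion (fun j => s ∩ A j) = s := by
  rw [← inter_biUnion, inter_eq_left.2 hs]

theorem sum_Icc_biUnion_prod_eq_prod_sum [DecidableEq ι] {R : Type*} [CommSemiring R]
    (hA : Pairwise (Disjoint on A)) (φ : ι → Finset α → R) {D : Finset α}
    (hD : D ⊆ univ.biUnion A) :
    ∑ s ∈ Icc D (univ.biUnion A), ∏ j, φ j (s ∩ A j)
      = ∏ j, ∑ t ∈ Icc (D ∩ A j) (A j), φ j t := by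
  rw [prod_univ_sum]
  refine sum_nbij' (fun s j => s ∩ A j) (fun p => univ.biUnion p) ?_ ?_ ?_ ?_ ?_
  · intro s hs
    rw [mem_Icc] at hs
    rw [Fintype.mem_piFinset]
    exact fun j => mem_Icc.2 ⟨inter_subset_inter_right hs.1, inter_subset_right⟩
  · intro p hp
    simp only [Fintype.mem_piFinset, mem_Icc] at hp
    refine mem_Icc.2 ⟨?_, biUnion_mono fun j _ => (hp j).2⟩
    rw [← biUnion_inter_eq_self_of_subset hD]
    exact biUnion_mono fun j _ => (hp j).1
  · intro s hs
    exact biUnion_inter_eq_self_of_subset (mem_Icc.1 hs).2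
  · intro p hp
    rw [Fintype.mem_piFinset] at hp
    exact funext (biUnion_inter_eq_of_pairwise_disjoint hA fun j => (mem_Icc.1 (hp j)).2)
  · intro s _
    rfl

end BlockProducts

section BinaryDistribution

variable {V ι : Type*} [Fintype V] [DecidableEq V]

theorem mu_pos {π : Finset V → ℝ} (hpos : ∀ H, 0 < π H) (D : Finset V) : 0 < mu π D :=
  sum_pos (fun H _ => hpos H) ⟨univ, by simp⟩

theorem mu_empty {π : Finset V → ℝ} (hsum : ∑ H ∈ (univ : Finset V).powerset, π H = 1) :
    mu π ∅ = 1 := by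
  simpa [mu] using hsum

theorem mu_eq_sum_cellProb (π : Finset V → ℝ) {A D : Finset V} (hDA : D ⊆ A) :
    mu π D = ∑ i ∈ Icc D A, cellProb π A i := by
  simp only [mu, cellProb, sum_filter]
  rw [sum_comm]
  refine sum_congr rfl fun H _ => ?_
  rw [sum_ite_eq]
  simp [subset_inter_iff, hDA]

theorem cellProb_prod_iff_mu_prod [Fintype ι] [DecidableEq ι] (π : Finset V → ℝ)
    {A : ι → Finset V} (hA : Pairwise (Disjoint on A)) :
    (∀ f : ι → Finset V, (∀ j, f j ⊆ A j) →
        cellProb π (univ.biUnion A) (univ.biUnion f) = ∏ j, cellProb π (A j) (f j)) ↔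
      ∀ D ⊆ univ.biUnion A, mu π D = ∏ j, mu π (D ∩ A j) := by
  have hprod : ∀ D ⊆ univ.biUnion A,
      ∑ i ∈ Icc D (univ.biUnion A), ∏ j, cellProb π (A j) (i ∩ A j)
        = ∏ j, mu π (D ∩ A j) :=
    fun D hD => by
      simp only [sum_Icc_biUnion_prod_eq_prod_sum hA _ hD,
        mu_eq_sum_cellProb π inter_subset_right]
  constructor
  · intro hcell D hD
    rw [mu_eq_sum_cellProb π hD, ← hprod D hD]
    refine sum_congr rfl fun i hi => ?_
    rw [← hcell _ fun j => inter_subset_right, biUnion_inter_eq_self_of_subset (mem_Icc.1 hi).2]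
  · intro hmu f hf
    have hfA : univ.biUnion f ⊆ univ.biUnion A := biUnion_mono fun j _ => hf j
    have hcells : ∀ i ⊆ univ.biUnion A,
        cellProb π (univ.biUnion A) i = ∏ j, cellProb π (A j) (i ∩ A j) :=
      eq_of_forall_sum_Icc_eq fun D hD => by
        rw [← mu_eq_sum_cellProb π hD, hprod D hD, hmu D hD]
    simp only [hcells _ hfA, biUnion_inter_eq_of_pairwise_disjoint hA hf]

end BinaryDistribution

theorem Real.eq_prod_iff_log_eq_sum {ι : Type*} {s : Finset ι} {x : ℝ} {y : ι → ℝ}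
    (hx : 0 < x) (hy : ∀ i ∈ s, 0 < y i) :
    x = ∏ i ∈ s, y i ↔ Real.log x = ∑ i ∈ s, Real.log (y i) := by
  rw [← Real.log_prod fun i hi => (hy i hi).ne']
  exact (Real.log_injOn_pos.eq_iff hx (prod_pos hy)).symm

theorem mutual_independence_iff_gamma_zero_general {V : Type*} [Fintype V] [DecidableEq V]
    (π : Finset V → ℝ) (hpos : ∀ H : Finset V, 0 < π H)
    (hsum : ∑ H ∈ (univ : Finset V).powerset, π H = 1)
    (r : ℕ) (A : Fin r → Finset V)
    (hdisj : ∀ i j, i ≠ j → Disjoint (A i) (A j)) :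
    (∀ f : Fin r → Finset V, (∀ j, f j ⊆ A j) →
        cellProb π (univ.biUnion A) (univ.biUnion f)
          = ∏ j : Fin r, cellProb π (A j) (f j)) ↔
      (∀ D ⊆ univ.biUnion A, (∀ i, ¬ D ⊆ A i) → gam π D = 0) := by
  have hlog_empty : Real.log (mu π ∅) = 0 := by rw [mu_empty hsum, Real.log_one]
  have hgam : gam π = moebiusTransform fun E => Real.log (mu π E) := rfl
  rw [cellProb_prod_iff_mu_prod π hdisj, hgam,
    ← forall_moebiusTransform_eq_zero_iff hdisj hlog_empty]
  exact forall₂_congr fun D _ =>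
    Real.eq_prod_iff_log_eq_sum (mu_pos hpos D) fun j _ => mu_pos hpos _

theorem mutual_independence_iff_gamma_zero {V : Type*} [Fintype V] [DecidableEq V]
    (π : Finset V → ℝ) (hpos : ∀ H : Finset V, 0 < π H)
    (hsum : ∑ H ∈ (univ : Finset V).powerset, π H = 1)
    (r : ℕ) (hr : 2 ≤ r) (A : Fin r → Finset V)
    (hne : ∀ i, (A i).Nonempty)
    (hdisj : ∀ i j, i ≠ j → Disjoint (A i) (A j)) :
    (∀ f : Fin r → Finset V, (∀ j, f j ⊆ A j) →
        cellProb π (univ.biUnion A) (univ.biUnion f)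
          = ∏ j : Fin r, cellProb π (A j) (f j)) ↔
      (∀ D ⊆ univ.biUnion A, (∀ i, ¬ D ⊆ A i) → gam π D = 0) :=
  mutual_independence_iff_gamma_zero_general π hpos hsum r A hdisj
end
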